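/- The k-retrospective ranking is non-increasing along G'-edges: if (u,v) ∈ E' then r^k(u) ≥ r^k(v). -/

import Mathlib

/-!
Along a `G'`-edge `(u, v)` the maximal profile grows by one letter: `h v = h u ++ [acc v]`.
After level `k` only non-accepting nodes are ⊤-labeled, and their labels are inherited from
their `G'`-parents. So every ⊤-class above `h v` on `v`'s level is `c ++ [⊥]` for a ⊤-class `c`
above `h u` on `u`'s level (that of a profile-maximal parent), which gives `α(v) ≤ α(u)`; and a
⊤-labeled `v` forces a ⊤-labeled `u`. When the edge leaves level `k`, the bound `r^k(v) ≤ m`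
holds because the ⊤-classes above `h v`, together with `h v` itself when `v` is ⊤-labeled, are
profiles of distinct non-accepting states.
-/

/-- Strict lexicographic order on finite 0-1 profiles. -/
def ProfLt (a b : List Bool) : Prop := List.Lex (· < ·) a b

/-- Non-strict lexicographic order on finite 0-1 profiles. -/
def ProfLe (a b : List Bool) : Prop := a = b ∨ ProfLt a b

/-- A nondeterministic Büchi automaton on infinite words. -/
structure NBW (Q : Type) (σ : Type) where
  init : Set Q
  trans : Q → σ → Set Q
  acc : Q → Bool

namespace NBW

variable {Q σ : Type} (A : NBW Q σ) (w : ℕ → σ)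

/-- `(q,i)` is a vertex of the run DAG of `A` on `w`. -/
def InDag (v : Q × ℕ) : Prop :=
  ∃ p : ℕ → Q, p 0 ∈ A.init ∧ (∀ j, j < v.2 → p (j + 1) ∈ A.trans (p j) (w j)) ∧ p v.2 = v.1

/-- Edge of the run DAG. -/
def Edge (u v : Q × ℕ) : Prop :=
  A.InDag w u ∧ v.2 = u.2 + 1 ∧ v.1 ∈ A.trans u.1 (w u.2)

/-- An infinite initial path through the (sub-)DAG with edge relation `E`. -/
def IsPath (E : Q × ℕ → Q × ℕ → Prop) (π : ℕ → Q × ℕ) : Prop :=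
  (π 0).1 ∈ A.init ∧ (π 0).2 = 0 ∧ ∀ i, E (π i) (π (i + 1))

/-- An accepting path: initial and visiting F-nodes infinitely often. -/
def AcceptingPath (E : Q × ℕ → Q × ℕ → Prop) (π : ℕ → Q × ℕ) : Prop :=
  A.IsPath E π ∧ ∀ N, ∃ i, N ≤ i ∧ A.acc (π i).1 = true

/-- Profile (sequence of acceptance labels) of the first `i+1` states of `p`. -/
def profileOf (p : ℕ → Q) (i : ℕ) : List Bool :=
  (List.range (i + 1)).map fun j => A.acc (p j)

/-- `p` encodes a finite initial run ending at node `v`. -/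
def FinRunTo (p : ℕ → Q) (v : Q × ℕ) : Prop :=
  p 0 ∈ A.init ∧ (∀ j, j < v.2 → p (j + 1) ∈ A.trans (p j) (w j)) ∧ p v.2 = v.1

/-- `h` assigns to each node the lexicographically maximal profile
over all finite initial runs to it. -/
def IsProfileFun (h : Q × ℕ → List Bool) : Prop :=
  ∀ v, A.InDag w v →
    (∃ p, A.FinRunTo w p v ∧ A.profileOf p v.2 = h v) ∧
    ∀ p, A.FinRunTo w p v → ProfLe (A.profileOf p v.2) (h v)

/-- Edges of the pruned DAG `G'`: only edges from predecessors of
lexicographically maximal profile are kept. -/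
def Edge' (h : Q × ℕ → List Bool) (u v : Q × ℕ) : Prop :=
  A.Edge w u v ∧ ∀ u', A.Edge w u' v → ¬ ProfLt (h u) (h u')

/-- `v` is finite in `G'`: it has finitely many descendants in `G'`. -/
def FiniteIn' (h : Q × ℕ → List Bool) (v : Q × ℕ) : Prop :=
  Set.Finite {u | Relation.ReflTransGen (A.Edge' w h) v u}

/-- Vertices of `G''`: vertices of the run DAG that are not finite in `G'`. -/
def InDag'' (h : Q × ℕ → List Bool) (v : Q × ℕ) : Prop :=
  A.InDag w v ∧ ¬ A.FiniteIn' w h v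

/-- Edges of `G''`. -/
def Edge'' (h : Q × ℕ → List Bool) (u v : Q × ℕ) : Prop :=
  A.Edge' w h u v ∧ A.InDag'' w h u ∧ A.InDag'' w h v

/-- `lam` is the retrospective labeling `λ^k`: ⊤ at levels ≤ k, ⊥ on F-nodes
after level k, inherited along `G'`-edges otherwise. -/
def IsRetroLabeling (h : Q × ℕ → List Bool) (k : ℕ) (lam : Q × ℕ → Bool) : Prop :=
  (∀ u, A.InDag w u → u.2 ≤ k → lam u = true) ∧
  (∀ u, A.InDag w u → k < u.2 → A.acc u.1 = true → lam u = false) ∧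
  (∀ u v, k < v.2 → A.acc v.1 = false → A.Edge' w h u v → lam v = lam u)

/-- A labeling is legal when every ⊥-labeled node is finite in `G'`. -/
def Legal (h : Q × ℕ → List Bool) (lam : Q × ℕ → Bool) : Prop :=
  ∀ u, A.InDag w u → lam u = false → A.FiniteIn' w h u

/-- `α(u)`: the number of ⊤-labeled profile-equivalence classes on `u`'s level
whose profile is strictly greater than `h u`. -/
noncomputable def alphaCount (h : Q × ℕ → List Bool) (lam : Q × ℕ → Bool) (u : Q × ℕ) : ℕ :=
  Set.ncard {p : List Bool | ∃ v, A.InDag w v ∧ v.2 = u.2 ∧ lam v = true ∧ h v = p ∧ ProfLt (h u) p}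

/-- The `k`-retrospective ranking (with top rank `m`). -/
noncomputable def retroRank (h : Q × ℕ → List Bool) (lam : Q × ℕ → Bool) (k m : ℕ)
    (u : Q × ℕ) : ℕ :=
  if u.2 ≤ k then m
  else if lam u then 2 * A.alphaCount w h lam u + 1 else 2 * A.alphaCount w h lam u

/-- `m = 2 |Q \ F|`. -/
def mBound [Fintype Q] : ℕ :=
  2 * Finset.card (Finset.univ.filter fun q => A.acc q = false)

end NBW

theorem List.append_lt_append_of_length_eq {α : Type*} [LT α] {a b : List α} (s t : List α)
    (hlen : a.length = b.length) (hab : a < b) : a ++ s < b ++ t := by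
  induction a generalizing b with
  | nil => cases b <;> simp_all
  | cons x a ih =>
    cases b with
    | nil => simp at hlen
    | cons y b =>
      cases hab with
      | rel hxy => exact List.Lex.rel hxy
      | cons hab => exact List.Lex.cons (ih (by simpa using hlen) hab)

theorem List.append_le_append_of_length_eq {α : Type*} [LinearOrder α] {a b : List α}
    (s : List α) (hlen : a.length = b.length) (hab : a ≤ b) : a ++ s ≤ b ++ s := by
  rcases hab.eq_or_lt with rfl | hab
  · exact le_rfl
  · exact (List.append_lt_append_of_length_eq s s hlen hab).le

theorem List.lt_of_append_lt_append_of_length_eq {α : Type*} [LinearOrder α] {a b s t : List α}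
    (hlen : a.length = b.length) (hts : t ≤ s) (h : a ++ s < b ++ t) : a < b := by
  refine lt_of_not_ge fun hba => h.not_ge ?_
  rcases hba.eq_or_lt with rfl | hba
  · rcases hts.eq_or_lt with rfl | hts
    · exact le_rfl
    · exact (List.append_left_lt hts).le
  · exact (List.append_lt_append_of_length_eq t s hlen.symm hba).le

namespace NBW

variable {Q σ : Type} {A : NBW Q σ} {w : ℕ → σ} {h : Q × ℕ → List Bool}

theorem profLe_iff_le {a b : List Bool} : ProfLe a b ↔ a ≤ b := le_iff_eq_or_lt.symm

theorem length_profileOf (A : NBW Q σ) (p : ℕ → Q) (i : ℕ) :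
    (A.profileOf p i).length = i + 1 := by
  simp [profileOf]

theorem profileOf_succ (p : ℕ → Q) (i : ℕ) :
    A.profileOf p (i + 1) = A.profileOf p i ++ [A.acc (p (i + 1))] := by
  simp [profileOf, List.range_succ]

theorem profileOf_extend (p : ℕ → Q) (n : ℕ) (q : Q) :
    A.profileOf (fun j => if j ≤ n then p j else q) (n + 1) = A.profileOf p n ++ [A.acc q] := by
  rw [profileOf_succ, if_neg (Nat.not_succ_le_self n)]
  congr 1
  simp only [profileOf, List.map_inj_left, List.mem_range]
  intro j hj
  rw [if_pos (Nat.lt_succ_iff.1 hj)]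

theorem FinRunTo.extend {p : ℕ → Q} {u v : Q × ℕ} (hp : A.FinRunTo w p u)
    (he : A.Edge w u v) : A.FinRunTo w (fun j => if j ≤ u.2 then p j else v.1) v := by
  obtain ⟨hp0, hstep, hpu⟩ := hp
  obtain ⟨-, hv2, htrans⟩ := he
  refine ⟨by simpa using hp0, fun j hj => ?_, by simp [hv2]⟩
  rcases Nat.lt_succ_iff_lt_or_eq.1 (hv2 ▸ hj) with hj | rfl
  · simpa [hj.le, Nat.succ_le_of_lt hj] using hstep j hj
  · simpa [hpu] using htrans

theorem FinRunTo.edge_pred {p : ℕ → Q} {v : Q × ℕ} {n : ℕ} (hp : A.FinRunTo w p v)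
    (hn : v.2 = n + 1) : A.Edge w (p n, n) v := by
  obtain ⟨hp0, hstep, hpv⟩ := hp
  refine ⟨⟨p, hp0, fun j hj => hstep j (by omega), rfl⟩, hn, ?_⟩
  simpa [← hn, hpv] using hstep n (by omega)

theorem Edge.inDag_right {u v : Q × ℕ} (he : A.Edge w u v) : A.InDag w v :=
  let ⟨p, hp⟩ := he.1
  ⟨fun j => if j ≤ u.2 then p j else v.1, FinRunTo.extend hp he⟩

theorem Edge.exists_edge' [Fintype Q] {u v : Q × ℕ} (he : A.Edge w u v) :
    ∃ u' : Q × ℕ, u'.2 = u.2 ∧ A.Edge' w h u' v := by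
  classical
  let preds : Finset Q := Finset.univ.filter fun q => A.Edge w (q, u.2) v
  obtain ⟨q, hq, hmax⟩ :=
    preds.exists_max_image (fun q => h (q, u.2)) ⟨u.1, by simpa [preds] using he⟩
  refine ⟨(q, u.2), rfl, (Finset.mem_filter.1 hq).2, fun u' he' hlt => ?_⟩
  have hu' : u' = (u'.1, u.2) := Prod.ext rfl (by have := he'.2.1; have := he.2.1; omega)
  rw [hu'] at he' hlt
  exact not_le_of_gt hlt (hmax u'.1 (by simpa [preds] using he'))

namespace IsProfileFun

variable (hprof : A.IsProfileFun w h)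
include hprof

theorem length_eq {v : Q × ℕ} (hv : A.InDag w v) : (h v).length = v.2 + 1 := by
  obtain ⟨⟨p, -, hpv⟩, -⟩ := hprof v hv
  rw [← hpv, length_profileOf]

theorem append_le_of_edge {u v : Q × ℕ} (he : A.Edge w u v) : h u ++ [A.acc v.1] ≤ h v := by
  obtain ⟨⟨p, hp, hpu⟩, -⟩ := hprof u he.1
  have hle := profLe_iff_le.1 ((hprof v he.inDag_right).2 _ (hp.extend he))
  rwa [he.2.1, profileOf_extend, hpu] at hle

theorem exists_edge_le_append {v : Q × ℕ} (hv : A.InDag w v) {n : ℕ} (hn : v.2 = n + 1) :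
    ∃ u' : Q × ℕ, A.Edge w u' v ∧ h v ≤ h u' ++ [A.acc v.1] := by
  obtain ⟨⟨p, hp, hpv⟩, -⟩ := hprof v hv
  have he := hp.edge_pred hn
  refine ⟨(p n, n), he, ?_⟩
  have hle := profLe_iff_le.1 ((hprof _ he.1).2 p ⟨hp.1, fun j hj => hp.2.1 j (by omega), rfl⟩)
  rw [← hpv, hn, profileOf_succ, ← hn, hp.2.2]
  exact List.append_le_append_of_length_eq _
    (by rw [length_profileOf, length_eq hprof he.1]) hle

theorem eq_append_of_edge' {u v : Q × ℕ} (huv : A.Edge' w h u v) :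
    h v = h u ++ [A.acc v.1] := by
  obtain ⟨he, hmax⟩ := huv
  obtain ⟨u', he', hle⟩ := hprof.exists_edge_le_append he.inDag_right he.2.1
  have hlen : (h u').length = (h u).length := by
    rw [hprof.length_eq he'.1, hprof.length_eq he.1]
    have := he.2.1; have := he'.2.1; omega
  refine le_antisymm (hle.trans ?_) (hprof.append_le_of_edge he)
  exact List.append_le_append_of_length_eq _ hlen (not_lt.1 (hmax u' he'))

end IsProfileFun

namespace IsRetroLabeling

variable {k : ℕ} {lam : Q × ℕ → Bool} (hlam : A.IsRetroLabeling w h k lam)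
include hlam

theorem acc_eq_false {v : Q × ℕ} (hv : A.InDag w v) (hk : k < v.2) (hlv : lam v = true) :
    A.acc v.1 = false := by
  by_contra hacc
  simp [hlam.2.1 v hv hk (by simpa using hacc)] at hlv

theorem eq_true_of_edge' {u v : Q × ℕ} (huv : A.Edge' w h u v) (hk : k < v.2)
    (hlv : lam v = true) : lam u = true :=
  hlam.2.2 u v hk (hlam.acc_eq_false huv.1.inDag_right hk hlv) huv ▸ hlv

end IsRetroLabeling

variable {k : ℕ} {lam : Q × ℕ → Bool}

def topClassesAbove (A : NBW Q σ) (w : ℕ → σ) (h : Q × ℕ → List Bool) (lam : Q × ℕ → Bool)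
    (u : Q × ℕ) : Set (List Bool) :=
  {p | ∃ v, A.InDag w v ∧ v.2 = u.2 ∧ lam v = true ∧ h v = p ∧ ProfLt (h u) p}

theorem alphaCount_eq_ncard (u : Q × ℕ) :
    A.alphaCount w h lam u = (A.topClassesAbove w h lam u).ncard := rfl

theorem topClassesAbove_subset_image (hlam : A.IsRetroLabeling w h k lam) {u : Q × ℕ}
    (hk : k < u.2) :
    A.topClassesAbove w h lam u ⊆ (fun q => h (q, u.2)) '' {q | A.acc q = false} := by
  rintro p ⟨x, hx, hxu, hlx, rfl, -⟩
  exact ⟨x.1, hlam.acc_eq_false hx (hxu ▸ hk) hlx, by rw [← hxu]⟩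

theorem ncard_image_nonaccepting_le [Fintype Q] {β : Type*} (f : Q → β) :
    (f '' {q | A.acc q = false}).ncard ≤ (Finset.univ.filter fun q => A.acc q = false).card := by
  classical
  calc _ ≤ {q | A.acc q = false}.ncard := Set.ncard_image_le (Set.toFinite _)
    _ = _ := by rw [← Set.ncard_coe_finset]; simp

theorem exists_mem_topClassesAbove_of_edge' [Fintype Q] (hprof : A.IsProfileFun w h)
    (hlam : A.IsRetroLabeling w h k lam) {u v : Q × ℕ} (huv : A.Edge' w h u v) (hk : k < u.2)
    {p : List Bool} (hp : p ∈ A.topClassesAbove w h lam v) :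
    ∃ q ∈ A.topClassesAbove w h lam u, p = q ++ [false] := by
  have hv := huv.1.2.1
  obtain ⟨x, hx, hxv, hlx, rfl, hlt⟩ := hp
  have hxk : k < x.2 := by omega
  have hacc := hlam.acc_eq_false hx hxk hlx
  obtain ⟨r, hr⟩ := hx
  have hrx : A.Edge w (r u.2, u.2) x := FinRunTo.edge_pred hr (by omega)
  obtain ⟨y, hy, hyx⟩ := hrx.exists_edge' (h := h)
  have hxy : h x = h y ++ [false] := by rw [hprof.eq_append_of_edge' hyx, hacc]
  refine ⟨h y, ⟨y, hyx.1.1, hy, hlam.2.2 y x hxk hacc hyx ▸ hlx, rfl, ?_⟩, hxy⟩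
  rw [hprof.eq_append_of_edge' huv, hxy] at hlt
  refine List.lt_of_append_lt_append_of_length_eq ?_ (by cases A.acc v.1 <;> decide) hlt
  rw [hprof.length_eq huv.1.1, hprof.length_eq hyx.1.1, hy]

theorem alphaCount_le_of_edge' [Fintype Q] (hprof : A.IsProfileFun w h)
    (hlam : A.IsRetroLabeling w h k lam) {u v : Q × ℕ} (huv : A.Edge' w h u v) (hk : k < u.2) :
    A.alphaCount w h lam v ≤ A.alphaCount w h lam u := by
  rw [alphaCount_eq_ncard, alphaCount_eq_ncard]
  refine Set.ncard_le_ncard_of_injOn List.dropLast (fun p hp => ?_)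
    (fun p hp p' hp' hpp' => ?_) ((Set.toFinite _).subset (topClassesAbove_subset_image hlam hk))
  · obtain ⟨q, hq, rfl⟩ := exists_mem_topClassesAbove_of_edge' hprof hlam huv hk hp
    rwa [List.dropLast_concat]
  · obtain ⟨q, -, rfl⟩ := exists_mem_topClassesAbove_of_edge' hprof hlam huv hk hp
    obtain ⟨q', -, rfl⟩ := exists_mem_topClassesAbove_of_edge' hprof hlam huv hk hp'
    rw [List.dropLast_concat, List.dropLast_concat] at hpp'
    rw [hpp']

theorem retroRank_le_mBound [Fintype Q] (hlam : A.IsRetroLabeling w h k lam) {v : Q × ℕ}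
    (hv : A.InDag w v) : A.retroRank w h lam k A.mBound v ≤ A.mBound := by
  rw [retroRank]
  split_ifs with hvk hlv
  · exact le_rfl
  all_goals
    have hk : k < v.2 := not_le.1 hvk
    have hsub := topClassesAbove_subset_image hlam hk
    have hcard := ncard_image_nonaccepting_le (A := A) fun q => h (q, v.2)
    rw [mBound, alphaCount_eq_ncard]
  · have hmem : h v ∈ (fun q => h (q, v.2)) '' {q | A.acc q = false} :=
      ⟨v.1, hlam.acc_eq_false hv hk hlv, rfl⟩
    have hnotMem : h v ∉ A.topClassesAbove w h lam v :=
      fun ⟨_, _, _, _, _, hlt⟩ => lt_irrefl (h v) hlt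
    have hins := Set.ncard_le_ncard (Set.insert_subset hmem hsub)
    rw [Set.ncard_insert_of_notMem hnotMem ((Set.toFinite _).subset hsub)] at hins
    omega
  · have := Set.ncard_le_ncard hsub
    omega

end NBW

/-- the `k`-retrospective ranking is non-increasing along `G'`-edges. -/
theorem stmt14 {Q σ : Type} [Fintype Q] (A : NBW Q σ) (w : ℕ → σ) (h : Q × ℕ → List Bool)
    (hprof : A.IsProfileFun w h) (k : ℕ) (lam : Q × ℕ → Bool)
    (hlam : A.IsRetroLabeling w h k lam)
    (u v : Q × ℕ) (huv : A.Edge' w h u v) :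
    A.retroRank w h lam k (A.mBound) v ≤ A.retroRank w h lam k (A.mBound) u := by
  by_cases huk : u.2 ≤ k
  · rw [show A.retroRank w h lam k A.mBound u = A.mBound from if_pos huk]
    exact NBW.retroRank_le_mBound hlam huv.1.inDag_right
  have hvk : k < v.2 := by have := huv.1.2.1; omega
  have hα := NBW.alphaCount_le_of_edge' hprof hlam huv (not_le.1 huk)
  simp only [NBW.retroRank, if_neg huk, if_neg hvk.not_ge]
  split_ifs with hlv hlu hlu
  · omega
  · exact absurd (hlam.eq_true_of_edge' huv hvk hlv) hlu
  all_goals omega
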